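/- arXiv:2010.03198 — 3 statements merged into one kernel-verified Lean document; each statement's English description precedes it below -/
import Mathlib

section
/- Let a ∈ (ℤ/2)^d nonzero, y ∈ (ℤ/2)^r nonzero, n_1,…,n_d ≥ 3 with 4 | gcd(n_1,…,n_d). Let M_a = A_{K_{n_1}}^{a_1} ⊗ ⋯ ⊗ A_{K_{n_d}}^{a_d}, M_y = A_{K_2}^{y_1} ⊗ ⋯ ⊗ A_{K_2}^{y_r}, and B = M_a ⊗ M_y. Then exp(-i(π/2)B) = (-1)^{w(a)-1} · i · (I_{n_1⋯n_d} ⊗ M_y), where w(a) is the Hamming weight of a. In particular the graph NEPS(K_{n_1},…,K_{n_d}, K_2,…,K_2; {(a,y)}) exhibits perfect state transfer at time π/2. -/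
open Kronecker

/-- Adjacency matrix of the complete graph `K_n`, as a complex matrix. -/
noncomputable def Kadj (n : ℕ) : Matrix (Fin n) (Fin n) ℂ :=
  Matrix.of fun i j => if i = j then 0 else 1

/-- Adjacency matrix of `K_2`, indexed by `ZMod 2`. -/
noncomputable def A2 : Matrix (ZMod 2) (ZMod 2) ℂ :=
  Matrix.of fun i j => if i = j then 0 else 1

/-- Kronecker product of a family of matrices. -/
noncomputable def kronC {d : ℕ} {n : Fin d → ℕ}
    (M : ∀ i, Matrix (Fin (n i)) (Fin (n i)) ℂ) :
    Matrix (∀ i, Fin (n i)) (∀ i, Fin (n i)) ℂ :=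
  Matrix.of fun u v => ∏ i, M i (u i) (v i)

/-- `M_a = A_{K_2}^{a_1} ⊗ ⋯ ⊗ A_{K_2}^{a_r}` for `a ∈ (ℤ/2)^r`. -/
noncomputable def cube {r : ℕ} (a : Fin r → ZMod 2) :
    Matrix (Fin r → ZMod 2) (Fin r → ZMod 2) ℂ :=
  Matrix.of fun u v => ∏ j, (if a j = 1 then A2 else 1) (u j) (v j)

/-- `A_{K_{n_1}}^{a_1} ⊗ ⋯ ⊗ A_{K_{n_d}}^{a_d}`. -/
noncomputable def compKron {d : ℕ} (n : Fin d → ℕ) (a : Fin d → ZMod 2) :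
    Matrix (∀ i, Fin (n i)) (∀ i, Fin (n i)) ℂ :=
  kronC fun i => if a i = 1 then Kadj (n i) else 1

/-- Hamming weight. -/
def wt {m : ℕ} (a : Fin m → ZMod 2) : ℕ :=
  (Finset.univ.filter fun i => a i = 1).card

/-!
Write `A_{K_n} = n P - I` with `P = J / n` idempotent. Expanding the tensor product,
`M_a = ∑_{T ⊆ supp a} c_T Q_T`, where `Q_T` is the tensor product of `P` on `T` and `I` off `T`,
`c_∅ = (-1)^{w(a)}` and `4 ∣ c_T` for `T ≠ ∅`, because `c_T` then has a factor `n_i`.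
The matrices `Z_T = Q_T ⊗ M_y` commute and satisfy `Z³ = Z` (as `M_y² = I`), and for such `Z`,
`exp (t Z) = 1 + sinh t • Z + (cosh t - 1) • Z²`. Since `-i(π/2) c_T ∈ 2πiℤ` for `T ≠ ∅`, only
the term `T = ∅` survives, and `Z_∅ = I ⊗ M_y` is an involution, so
`exp (-i(π/2)(-1)^{w(a)} Z_∅) = -i(-1)^{w(a)} Z_∅`.
-/

open NormedSpace Finset

section PiKron

variable {ι R : Type*} {κ : ι → Type*} [Fintype ι] [CommSemiring R]

def piKron (M : ∀ i, Matrix (κ i) (κ i) R) : Matrix (∀ i, κ i) (∀ i, κ i) R :=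
  Matrix.of fun u v => ∏ i, M i (u i) (v i)

theorem piKron_mul [DecidableEq ι] [∀ i, Fintype (κ i)] (M N : ∀ i, Matrix (κ i) (κ i) R) :
    piKron M * piKron N = piKron (M * N) := by
  ext u v
  simp only [piKron, Matrix.mul_apply, Matrix.of_apply, Pi.mul_apply, Fintype.prod_sum,
    prod_mul_distrib]

theorem piKron_one [∀ i, DecidableEq (κ i)] :
    piKron (1 : ∀ i, Matrix (κ i) (κ i) R) = 1 := by
  ext u v
  simp only [piKron, Matrix.of_apply, Pi.one_apply, Matrix.one_apply, Fintype.prod_boole,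
    funext_iff]

theorem piKron_smul (c : ι → R) (M : ∀ i, Matrix (κ i) (κ i) R) :
    piKron (fun i => c i • M i) = (∏ i, c i) • piKron M := by
  ext u v
  simp only [piKron, Matrix.of_apply, Matrix.smul_apply, smul_eq_mul, prod_mul_distrib]

theorem piKron_add [DecidableEq ι] (M N : ∀ i, Matrix (κ i) (κ i) R) :
    piKron (M + N) = ∑ T ∈ univ.powerset, piKron (T.piecewise M N) := by
  ext u v
  simp only [piKron, Matrix.of_apply, Pi.add_apply, Matrix.add_apply, prod_add, Matrix.sum_apply]
  refine sum_congr rfl fun T _ => ?_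
  have hT : ∀ i, T.piecewise M N i (u i) (v i)
      = T.piecewise (fun i => M i (u i) (v i)) (fun i => N i (u i) (v i)) i := fun i => by
    by_cases hi : i ∈ T <;> simp [hi]
  simp only [hT, prod_piecewise, univ_inter]

theorem IsIdempotentElem.piKron [DecidableEq ι] [∀ i, Fintype (κ i)]
    {M : ∀ i, Matrix (κ i) (κ i) R} (hM : ∀ i, IsIdempotentElem (M i)) :
    IsIdempotentElem (piKron M) := by
  rw [IsIdempotentElem, piKron_mul]
  exact congrArg _ (funext hM)

theorem Commute.piKron [DecidableEq ι] [∀ i, Fintype (κ i)]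
    {M N : ∀ i, Matrix (κ i) (κ i) R} (h : ∀ i, Commute (M i) (N i)) :
    Commute (piKron M) (piKron N) := by
  rw [Commute, SemiconjBy, piKron_mul, piKron_mul]
  exact congrArg _ (funext h)

end PiKron

section Kronecker

variable {R l m : Type*} [CommSemiring R]

theorem Commute.kronecker [Fintype l] [Fintype m] {A A' : Matrix l l R} {B B' : Matrix m m R}
    (hA : Commute A A') (hB : Commute B B') : Commute (A ⊗ₖ B) (A' ⊗ₖ B') := by
  rw [Commute, SemiconjBy, ← Matrix.mul_kronecker_mul, ← Matrix.mul_kronecker_mul, hA.eq, hB.eq]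

theorem kronecker_mul_mul_self_of_isIdempotentElem [Fintype l] [Fintype m] [DecidableEq m]
    {Q : Matrix l l R} {M : Matrix m m R} (hQ : IsIdempotentElem Q) (hM : M * M = 1) :
    (Q ⊗ₖ M) * (Q ⊗ₖ M) * (Q ⊗ₖ M) = Q ⊗ₖ M := by
  simp only [← Matrix.mul_kronecker_mul, hQ.eq, hM, one_mul]

theorem Matrix.sum_kronecker {ι : Type*} (s : Finset ι) (A : ι → Matrix l l R)
    (B : Matrix m m R) :
    (∑ i ∈ s, A i) ⊗ₖ B = ∑ i ∈ s, A i ⊗ₖ B := by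
  ext
  simp only [Matrix.kroneckerMap_apply, Matrix.sum_apply, sum_mul]

end Kronecker

section ExpFormulas
variable {𝔸 : Type*} [NormedRing 𝔸] [NormedAlgebra ℂ 𝔸] [CompleteSpace 𝔸]

theorem exp_smul_of_isIdempotentElem {e : 𝔸} (he : IsIdempotentElem e) (c : ℂ) :
    exp (c • e) = Complex.exp c • e + (1 - e) := by
  have hterm : ∀ k : ℕ, ((k.factorial : ℂ)⁻¹ • (c • e) ^ k)
      = ((k.factorial : ℂ)⁻¹ * c ^ k) • e + Pi.single (M := fun _ => 𝔸) 0 (1 - e) k := by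
    rintro (_ | k)
    · simp
    · simp [smul_pow, he.pow_succ_eq, smul_smul]
  have h := ((exp_series_hasSum_exp' (𝕂 := ℂ) c).smul_const e).add
    (hasSum_pi_single 0 (1 - e))
  rw [← Complex.exp_eq_exp_ℂ] at h
  exact (exp_series_hasSum_exp' (𝕂 := ℂ) (c • e)).unique
    (by simpa only [hterm, smul_eq_mul] using h)

theorem exp_smul_of_mul_mul_self_eq {z : 𝔸} (hz : z * z * z = z) (t : ℂ) :
    exp (t • z) = 1 + Complex.sinh t • z + (Complex.cosh t - 1) • (z * z) := by
  set p := z * z with hp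
  have hpz : p * z = z := hz
  have hzp : z * p = z := by rw [hp, ← mul_assoc, hz]
  have hpp : p * p = p := by rw [hp, ← mul_assoc, hz]
  -- `z = e₁ - e₂` is a difference of orthogonal idempotents
  set e₁ : 𝔸 := (2 : ℂ)⁻¹ • (p + z)
  set e₂ : 𝔸 := (2 : ℂ)⁻¹ • (p - z)
  have h₁ : IsIdempotentElem e₁ := by
    simp only [IsIdempotentElem, e₁, smul_mul_smul, add_mul, mul_add, hpp, hpz, hzp, ← hp]
    module
  have h₂ : IsIdempotentElem e₂ := by
    simp only [IsIdempotentElem, e₂, smul_mul_smul, sub_mul, mul_sub, hpp, hpz, hzp, ← hp]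
    module
  have h₁₂ : e₁ * e₂ = 0 := by
    simp only [e₁, e₂, smul_mul_smul, add_mul, mul_sub, hpp, hpz, hzp, ← hp]
    module
  have h₂₁ : e₂ * e₁ = 0 := by
    simp only [e₁, e₂, smul_mul_smul, sub_mul, mul_add, hpp, hpz, hzp, ← hp]
    module
  have hsplit : t • z = t • e₁ + (-t) • e₂ := by simp only [e₁, e₂]; module
  have hcomm : Commute (t • e₁) ((-t) • e₂) :=
    ((show Commute e₁ e₂ from h₁₂.trans h₂₁.symm).smul_left t).smul_right (-t)
  let : NormedAlgebra ℚ 𝔸 := NormedAlgebra.restrictScalars ℚ ℂ 𝔸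
  rw [hsplit, exp_add_of_commute hcomm, exp_smul_of_isIdempotentElem h₁,
    exp_smul_of_isIdempotentElem h₂]
  simp only [mul_add, add_mul, mul_sub, sub_mul, smul_mul_assoc, mul_smul_comm,
    one_mul, mul_one, h₁₂, smul_zero]
  simp only [e₁, e₂, Complex.sinh, Complex.cosh]
  module

theorem exp_smul_eq_one_of_mul_mul_self_eq {z : 𝔸} (hz : z * z * z = z) {t : ℂ}
    (ht : Complex.exp t = 1) : exp (t • z) = 1 := by
  have ht' : Complex.exp (-t) = 1 := by rw [Complex.exp_neg, ht, inv_one]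
  rw [exp_smul_of_mul_mul_self_eq hz, Complex.sinh, Complex.cosh, ht, ht']
  norm_num

theorem exp_smul_of_mul_self_eq_one {s : 𝔸} (hs : s * s = 1) {t : ℂ}
    (ht : Complex.exp t ^ 2 = -1) : exp (t • s) = Complex.exp t • s := by
  have ht' : Complex.exp (-t) = -Complex.exp t := by
    rw [Complex.exp_neg, inv_eq_of_mul_eq_one_right (a := Complex.exp t)]
    linear_combination -ht
  rw [exp_smul_of_mul_mul_self_eq (by rw [hs, one_mul]) t, hs, Complex.sinh, Complex.cosh, ht']
  module

theorem exp_sum_eq_exp_of_forall_ne {ι : Type*} [DecidableEq ι] {s : Finset ι} {f : ι → 𝔸}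
    (h : (s : Set ι).Pairwise fun i j => Commute (f i) (f j)) {i₀ : ι} (hi₀ : i₀ ∈ s)
    (h1 : ∀ i ∈ s, i ≠ i₀ → exp (f i) = 1) : exp (∑ i ∈ s, f i) = exp (f i₀) := by
  let : NormedAlgebra ℚ 𝔸 := NormedAlgebra.restrictScalars ℚ ℂ 𝔸
  rw [exp_sum_of_commute s f h]
  refine (noncommProd_erase_mul s hi₀ _ _).symm.trans ?_
  have h1' : ∀ i ∈ s.erase i₀, exp (f i) = 1 := fun i hi =>
    h1 i (mem_of_mem_erase hi) (ne_of_mem_erase hi)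
  exact (congrArg (· * _) (noncommProd_eq_pow_card _ _ _ 1 h1')).trans (by rw [one_pow, one_mul])

end ExpFormulas

section CompleteGraph

noncomputable def meanProj (n : ℕ) : Matrix (Fin n) (Fin n) ℂ :=
  Matrix.of fun _ _ => (n : ℂ)⁻¹

theorem isIdempotentElem_meanProj {n : ℕ} (hn : n ≠ 0) : IsIdempotentElem (meanProj n) := by
  ext
  simp only [meanProj, Matrix.mul_apply, Matrix.of_apply, sum_const, card_univ, Fintype.card_fin,
    nsmul_eq_mul]
  field_simp

theorem Kadj_eq_smul_meanProj_sub_one {n : ℕ} (hn : n ≠ 0) :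
    Kadj n = (n : ℂ) • meanProj n - 1 := by
  ext i j
  by_cases h : i = j <;> simp [Kadj, meanProj, h, hn]

noncomputable def meanProjKron {d : ℕ} (n : Fin d → ℕ) (T : Finset (Fin d)) :
    Matrix (∀ i, Fin (n i)) (∀ i, Fin (n i)) ℂ :=
  piKron (T.piecewise (fun i => meanProj (n i)) 1)

theorem isIdempotentElem_meanProjKron {d : ℕ} {n : Fin d → ℕ} (hn : ∀ i, n i ≠ 0)
    (T : Finset (Fin d)) : IsIdempotentElem (meanProjKron n T) :=
  IsIdempotentElem.piKron fun i => by
    by_cases hi : i ∈ T <;> simp [hi, isIdempotentElem_meanProj (hn i), IsIdempotentElem.one]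

theorem commute_meanProjKron {d : ℕ} (n : Fin d → ℕ) (T T' : Finset (Fin d)) :
    Commute (meanProjKron n T) (meanProjKron n T') :=
  Commute.piKron fun i => by by_cases hi : i ∈ T <;> by_cases hi' : i ∈ T' <;> simp [hi, hi']

theorem meanProjKron_empty {d : ℕ} (n : Fin d → ℕ) : meanProjKron n ∅ = 1 := by
  rw [meanProjKron, piecewise_empty, piKron_one]

end CompleteGraph

section Cube

theorem ZMod.eq_zero_or_eq_one_of_two (z : ZMod 2) : z = 0 ∨ z = 1 := by
  revert z
  decide

theorem A2_mul_self : A2 * A2 = 1 := by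
  ext i j
  rw [Matrix.mul_apply, show (univ : Finset (ZMod 2)) = {0, 1} from rfl, sum_pair zero_ne_one]
  rcases ZMod.eq_zero_or_eq_one_of_two i with rfl | rfl <;>
    rcases ZMod.eq_zero_or_eq_one_of_two j with rfl | rfl <;> simp [A2]

theorem cube_mul_self {r : ℕ} (y : Fin r → ZMod 2) : cube y * cube y = 1 := by
  change piKron _ * piKron _ = 1
  rw [piKron_mul, ← piKron_one]
  congr 1
  funext j
  by_cases h : y j = 1 <;> simp [h, A2_mul_self]

theorem cube_apply_add_self {r : ℕ} (y : Fin r → ZMod 2) (u : Fin r → ZMod 2) :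
    cube y u (u + y) = 1 := by
  simp only [cube, Matrix.of_apply]
  refine Finset.prod_eq_one fun j _ => ?_
  rcases ZMod.eq_zero_or_eq_one_of_two (y j) with h | h <;> simp [h, A2, Matrix.one_apply]

theorem wt_pos {m : ℕ} {a : Fin m → ZMod 2} (ha : a ≠ 0) : 0 < wt a := by
  obtain ⟨i, hi⟩ := Function.ne_iff.mp ha
  refine card_pos.mpr ⟨i, mem_filter.mpr ⟨mem_univ i, ?_⟩⟩
  exact (ZMod.eq_zero_or_eq_one_of_two _).resolve_left hi

end Cube

section Decomposition

variable {d : ℕ} (n : Fin d → ℕ) (a : Fin d → ZMod 2)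

-- Zero unless `T ⊆ supp a`, so sums over all `T` below agree with sums over `T ⊆ supp a`.
def compKronCoeff (T : Finset (Fin d)) : ℤ :=
  ∏ i, T.piecewise (fun i => if a i = 1 then (n i : ℤ) else 0)
    (fun i => if a i = 1 then -1 else 1) i

theorem compKron_eq_sum (hn : ∀ i, n i ≠ 0) :
    compKron n a = ∑ T ∈ univ.powerset, (compKronCoeff n a T : ℂ) • meanProjKron n T := by
  set N : Fin d → ℤ := fun i => if a i = 1 then (n i : ℤ) else 0
  set D : Fin d → ℤ := fun i => if a i = 1 then -1 else 1
  have hfactor : (fun i => if a i = 1 then Kadj (n i) else 1)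
      = (fun i => (N i : ℂ) • meanProj (n i)) + fun i => (D i : ℂ) • 1 := by
    funext i
    by_cases h : a i = 1 <;> simp [N, D, h, Kadj_eq_smul_meanProj_sub_one (hn i), sub_eq_add_neg]
  change piKron _ = _
  rw [hfactor, piKron_add]
  refine sum_congr rfl fun T _ => ?_
  have hT : T.piecewise (fun i => (N i : ℂ) • meanProj (n i)) (fun i => (D i : ℂ) • 1)
      = fun i => (T.piecewise N D i : ℂ) • T.piecewise (fun i => meanProj (n i)) 1 i := by
    funext i
    by_cases hi : i ∈ T <;> simp [hi]
  rw [hT, piKron_smul, compKronCoeff, Int.cast_prod, meanProjKron]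

theorem compKronCoeff_empty : compKronCoeff n a ∅ = (-1) ^ wt a := by
  simp [compKronCoeff, wt, prod_ite]

theorem four_dvd_compKronCoeff (h4 : ∀ i, 4 ∣ n i) {T : Finset (Fin d)} (hT : T.Nonempty) :
    4 ∣ compKronCoeff n a T := by
  obtain ⟨i, hi⟩ := hT
  refine dvd_trans ?_ (dvd_prod_of_mem _ (mem_univ i))
  rw [piecewise_eq_of_mem _ _ _ hi]
  split_ifs
  · exact_mod_cast h4 i
  · exact dvd_zero 4

end Decomposition

open Complex Real in
theorem exp_neg_I_mul_pi_div_two_mul_neg_one_pow (k : ℕ) :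
    Complex.exp (-I * ((π / 2 : ℝ) : ℂ) * (-1) ^ k) = -I * (-1) ^ k := by
  rcases neg_one_pow_eq_or ℂ k with h | h <;> rw [h]
  · rw [show -I * ((π / 2 : ℝ) : ℂ) * 1 = -π / 2 * I by push_cast; ring,
      exp_neg_pi_div_two_mul_I, mul_one]
  · rw [show -I * ((π / 2 : ℝ) : ℂ) * -1 = π / 2 * I by push_cast; ring,
      exp_pi_div_two_mul_I]
    ring

theorem exp_neg_I_mul_pi_div_two_mul_of_four_dvd {m : ℤ} (hm : 4 ∣ m) :
    Complex.exp (-Complex.I * ((Real.pi / 2 : ℝ) : ℂ) * m) = 1 := by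
  obtain ⟨k, rfl⟩ := hm
  rw [← Complex.exp_int_mul_two_pi_mul_I (-k)]
  push_cast
  ring_nf

theorem exp_compKron_kronecker_cube {d r : ℕ} {n : Fin d → ℕ} (hn : ∀ i, n i ≠ 0)
    (h4 : ∀ i, 4 ∣ n i) (a : Fin d → ZMod 2) (y : Fin r → ZMod 2) :
    exp ((-Complex.I * ((Real.pi / 2 : ℝ) : ℂ)) • (compKron n a ⊗ₖ cube y)) =
      (-Complex.I * (-1) ^ wt a) •
        ((1 : Matrix (∀ i, Fin (n i)) (∀ i, Fin (n i)) ℂ) ⊗ₖ cube y) := by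
  set c : ℂ := -Complex.I * ((Real.pi / 2 : ℝ) : ℂ)
  have hsum : c • (compKron n a ⊗ₖ cube y) =
      ∑ T ∈ univ.powerset, (c * compKronCoeff n a T) • (meanProjKron n T ⊗ₖ cube y) := by
    simp only [compKron_eq_sum n a hn, Matrix.sum_kronecker, smul_sum, Matrix.smul_kronecker,
      smul_smul]
  have hexp_empty : Complex.exp (c * compKronCoeff n a ∅) = -Complex.I * (-1) ^ wt a := by
    rw [compKronCoeff_empty]
    push_cast
    exact exp_neg_I_mul_pi_div_two_mul_neg_one_pow (wt a)
  have hexp_one : ∀ T ∈ univ.powerset, T ≠ ∅ →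
      exp ((c * compKronCoeff n a T) • (meanProjKron n T ⊗ₖ cube y)) = 1 := fun T _ hT =>
    open scoped Matrix.Norms.Operator in
    exp_smul_eq_one_of_mul_mul_self_eq
      (kronecker_mul_mul_self_of_isIdempotentElem (isIdempotentElem_meanProjKron hn T)
        (cube_mul_self y))
      (exp_neg_I_mul_pi_div_two_mul_of_four_dvd
        (four_dvd_compKronCoeff n a h4 (nonempty_iff_ne_empty.mpr hT)))
  have hinv : ((1 : Matrix (∀ i, Fin (n i)) (∀ i, Fin (n i)) ℂ) ⊗ₖ cube y) * (1 ⊗ₖ cube y) = 1 := by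
    rw [← Matrix.mul_kronecker_mul, one_mul, cube_mul_self, Matrix.one_kronecker_one]
  rw [hsum]
  open scoped Matrix.Norms.Operator in
  refine (exp_sum_eq_exp_of_forall_ne (fun T _ T' _ _ =>
      (((commute_meanProjKron n T T').kronecker (Commute.refl _)).smul_left _).smul_right _)
    (empty_mem_powerset _) hexp_one).trans ?_
  rw [meanProjKron_empty, ← hexp_empty]
  open scoped Matrix.Norms.Operator in
  refine exp_smul_of_mul_self_eq_one hinv ?_
  rw [hexp_empty, mul_pow, ← pow_mul, mul_comm (wt a), pow_mul]
  simp

theorem stmt11_general (d r : ℕ) (n : Fin d → ℕ) (hn : ∀ i, 3 ≤ n i)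
    (h4 : 4 ∣ Finset.univ.gcd n)
    (a : Fin d → ZMod 2) (ha : a ≠ 0) (y : Fin r → ZMod 2) (hy : y ≠ 0) :
    NormedSpace.exp ((-Complex.I * ((Real.pi / 2 : ℝ) : ℂ)) •
        ((compKron n a) ⊗ₖ (cube y))) =
      ((-1 : ℂ) ^ (wt a - 1) * Complex.I) •
        ((1 : Matrix (∀ i, Fin (n i)) (∀ i, Fin (n i)) ℂ) ⊗ₖ cube y) ∧
    ∀ (x : ∀ i, Fin (n i)) (u : Fin r → ZMod 2),
      (x, u) ≠ (x, u + y) ∧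
      ‖((NormedSpace.exp ((-Complex.I * ((Real.pi / 2 : ℝ) : ℂ)) •
        ((compKron n a) ⊗ₖ (cube y)))) (x, u) (x, u + y))‖ = 1 := by
  have hexp : exp ((-Complex.I * ((Real.pi / 2 : ℝ) : ℂ)) • (compKron n a ⊗ₖ cube y)) =
      ((-1 : ℂ) ^ (wt a - 1) * Complex.I) •
        ((1 : Matrix (∀ i, Fin (n i)) (∀ i, Fin (n i)) ℂ) ⊗ₖ cube y) := by
    rw [exp_compKron_kronecker_cube (fun i => by have := hn i; omega)
      (fun i => h4.trans (gcd_dvd (mem_univ i)))]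
    obtain ⟨k, hk⟩ := Nat.exists_eq_add_of_lt (wt_pos ha)
    rw [hk, zero_add, Nat.add_sub_cancel, pow_succ]
    congr 1
    ring
  refine ⟨hexp, fun x u => ⟨by simpa using hy, ?_⟩⟩
  rw [hexp, Matrix.smul_apply, Matrix.kroneckerMap_apply, Matrix.one_apply_eq, cube_apply_add_self]
  simp

/-- for nonzero `a ∈ (ℤ/2)^d`, nonzero `y ∈ (ℤ/2)^r`, `n_i ≥ 3` with
`4 ∣ gcd(n_1,…,n_d)`, `exp(-i(π/2)(M_a ⊗ M_y)) = (-1)^{w(a)-1}·i·(I ⊗ M_y)`; in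
particular perfect state transfer occurs at time `π/2`. -/
theorem stmt11 (d r : ℕ) (hd : 0 < d) (n : Fin d → ℕ) (hn : ∀ i, 3 ≤ n i)
    (h4 : 4 ∣ Finset.univ.gcd n)
    (a : Fin d → ZMod 2) (ha : a ≠ 0) (y : Fin r → ZMod 2) (hy : y ≠ 0) :
    NormedSpace.exp ((-Complex.I * ((Real.pi / 2 : ℝ) : ℂ)) •
        ((compKron n a) ⊗ₖ (cube y))) =
      ((-1 : ℂ) ^ (wt a - 1) * Complex.I) •
        ((1 : Matrix (∀ i, Fin (n i)) (∀ i, Fin (n i)) ℂ) ⊗ₖ cube y) ∧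
    ∀ (x : ∀ i, Fin (n i)) (u : Fin r → ZMod 2),
      (x, u) ≠ (x, u + y) ∧
      ‖((NormedSpace.exp ((-Complex.I * ((Real.pi / 2 : ℝ) : ℂ)) •
        ((compKron n a) ⊗ₖ (cube y)))) (x, u) (x, u + y))‖ = 1 :=
  stmt11_general d r n hn h4 a ha y hy
end

section
/- Let 𝒜 ⊆ (ℤ/2)^{d+r} \ {0} be nonempty with every element having its last r coordinates zero, i.e. 𝒜 = {(a,0) : a ∈ 𝒜'} for some 𝒜' ⊆ (ℤ/2)^d \ {0}. Let n_1,…,n_d ≥ 3, h = gcd(n_1,…,n_d), and let B = Σ_{a∈𝒜'} (A_{K_{n_1}}^{a_1} ⊗ ⋯ ⊗ A_{K_{n_d}}^{a_d}) ⊗ I_{2^r}. Then exp(-i(2π/h)B) = exp(Σ_{a∈𝒜'} (-1)^{w(a)-1}(2π/h)i) · I; in particular every diagonal entry of exp(-i(2π/h)B) has modulus 1 (the graph is periodic with period 2π/h). -/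
open Kronecker

/-!
Write `J_S` for the Kronecker product with all-ones factors on the coordinates in `S` and
identity factors elsewhere. The `J_S` pairwise commute and `J_S ^ 2 = (∏_{i ∈ S} n_i) • J_S`.
Since `A_{K_n} = J_n - I_n`, the summand indexed by `a` expands as
`∑_{t ⊆ supp a} (-1)^|t| J_{supp a \ t}`. For `S ≠ ∅` the number `∏_{i ∈ S} n_i` is a multiple
of `h`, and `J_S / ∏_{i ∈ S} n_i` is idempotent, so `exp(-i (2π/h) m J_S) = 1` for every integer
`m`. Only the terms with `J_∅ = I` survive, each contributing the scalar
`exp(-i (2π/h) (-1)^{w(a)})`. The factor `I_{2^r}` is carried along by the continuous ring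
homomorphism `X ↦ X ⊗ I`.
-/

open Finset NormedSpace

namespace NormedSpace

variable {𝔸 : Type*} [NormedRing 𝔸] [NormedAlgebra ℂ 𝔸] [CompleteSpace 𝔸]

theorem exp_smul_of_isIdempotentElem {P : 𝔸} (hP : IsIdempotentElem P) (w : ℂ) :
    exp (w • P) = 1 + (Complex.exp w - 1) • P := by
  have hterm : ∀ k : ℕ, ((k.factorial : ℂ)⁻¹) • (w • P) ^ k =
      ((k.factorial : ℂ)⁻¹ * w ^ k) • P + Pi.single (M := fun _ => 𝔸) 0 (1 - P) k := by
    rintro (_ | k)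
    · simp
    · rw [smul_pow, hP.pow_succ_eq, smul_smul, Pi.single_eq_of_ne (Nat.succ_ne_zero k), add_zero]
  have hsum := ((exp_series_hasSum_exp' (𝕂 := ℂ) w).smul_const P).add (hasSum_pi_single 0 (1 - P))
  rw [← Complex.exp_eq_exp_ℂ] at hsum
  refine (exp_series_hasSum_exp' (𝕂 := ℂ) (w • P)).unique ?_
  convert hsum using 1
  · exact funext hterm
  · rw [sub_smul, one_smul]; abel

theorem exp_smul_eq_one_of_mul_self_eq_smul {E : 𝔸} {N z : ℂ} (hN : N ≠ 0)
    (hE : E * E = N • E) (hz : Complex.exp (z * N) = 1) : exp (z • E) = 1 := by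
  have hP : IsIdempotentElem (N⁻¹ • E) := by
    rw [IsIdempotentElem, smul_mul_smul_comm, hE, smul_smul, mul_assoc, inv_mul_cancel₀ hN, mul_one]
  rw [show z • E = (z * N) • (N⁻¹ • E) by rw [smul_smul, mul_inv_cancel_right₀ hN],
    exp_smul_of_isIdempotentElem hP, hz, sub_self, zero_smul, add_zero]

theorem exp_smul_one (z : ℂ) : exp (z • (1 : 𝔸)) = Complex.exp z • 1 := by
  rw [exp_smul_of_isIdempotentElem IsIdempotentElem.one, sub_smul, one_smul, add_sub_cancel]

theorem exp_sum_of_commute_of_exp_eq_smul_one {ι : Type*} (s : Finset ι) (f : ι → 𝔸)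
    (g : ι → ℂ) (hf : (s : Set ι).Pairwise fun i j => Commute (f i) (f j))
    (hg : ∀ i ∈ s, exp (f i) = g i • 1) :
    exp (∑ i ∈ s, f i) = (∏ i ∈ s, g i) • 1 := by
  classical
  let : NormedAlgebra ℚ 𝔸 := NormedAlgebra.restrictScalars ℚ ℂ 𝔸
  induction s using Finset.induction_on with
  | empty => simp
  | insert a s ha ih =>
    rw [Finset.sum_insert ha, Finset.prod_insert ha, exp_add_of_commute,
      hg a (s.mem_insert_self a), ih (hf.mono (s.subset_insert a))
        fun i hi => hg i (Finset.mem_insert_of_mem hi), smul_mul_smul_comm, one_mul]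
    exact Commute.sum_right _ _ _ fun i hi =>
      hf.of_refl (s.mem_insert_self a) (Finset.mem_insert_of_mem hi)

end NormedSpace

theorem Complex.exp_neg_I_mul_two_pi_div_mul_natCast_of_dvd {h N : ℕ} (hdvd : h ∣ N) :
    Complex.exp (-Complex.I * ((2 * Real.pi / h : ℝ) : ℂ) * N) = 1 := by
  rcases eq_or_ne h 0 with rfl | hh
  · simp
  obtain ⟨m, rfl⟩ := hdvd
  convert Complex.exp_int_mul_two_pi_mul_I (-m) using 2
  push_cast
  field_simp

section KroneckerFamily

variable {d : ℕ} {n : Fin d → ℕ}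

theorem kronC_mul (M N : ∀ i, Matrix (Fin (n i)) (Fin (n i)) ℂ) :
    kronC M * kronC N = kronC fun i => M i * N i := by
  ext u v
  simp only [kronC, Matrix.mul_apply, Matrix.of_apply, ← prod_mul_distrib]
  rw [prod_univ_sum (fun _ => univ) (fun i x => M i (u i) x * N i x (v i)),
    Fintype.piFinset_univ]

theorem kronC_smul (c : Fin d → ℂ) (M : ∀ i, Matrix (Fin (n i)) (Fin (n i)) ℂ) :
    (kronC fun i => c i • M i) = (∏ i, c i) • kronC M := by
  ext u v
  simp [kronC, prod_mul_distrib]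

theorem kronC_one : (kronC fun i => (1 : Matrix (Fin (n i)) (Fin (n i)) ℂ)) = 1 := by
  ext u v
  simp [kronC, Matrix.one_apply, Fintype.prod_boole, funext_iff]

variable (n) in
noncomputable def onesOn (S : Finset (Fin d)) : Matrix (∀ i, Fin (n i)) (∀ i, Fin (n i)) ℂ :=
  kronC fun i => if i ∈ S then Matrix.of 1 else 1

theorem onesOn_apply (S : Finset (Fin d)) (u v : ∀ i, Fin (n i)) :
    onesOn n S u v = ∏ i ∈ Sᶜ, if u i = v i then 1 else 0 := by
  rw [onesOn, kronC, Matrix.of_apply, ← prod_mul_prod_compl S]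
  rw [prod_eq_one fun i hi => by simp [hi], one_mul]
  exact prod_congr rfl fun i hi => by simp [mem_compl.mp hi, Matrix.one_apply]

theorem onesOn_empty : onesOn n ∅ = 1 := by
  simpa [onesOn] using kronC_one

theorem onesOn_mul_onesOn (S T : Finset (Fin d)) :
    onesOn n S * onesOn n T = (∏ i ∈ S ∩ T, (n i : ℂ)) • onesOn n (S ∪ T) := by
  have hfactor : ∀ i, ((if i ∈ S then Matrix.of 1 else 1) * (if i ∈ T then Matrix.of 1 else 1) :
      Matrix (Fin (n i)) (Fin (n i)) ℂ) =
      (if i ∈ S ∩ T then (n i : ℂ) else 1) • (if i ∈ S ∪ T then Matrix.of 1 else 1) := by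
    intro i
    have hJ : (Matrix.of 1 * Matrix.of 1 : Matrix (Fin (n i)) (Fin (n i)) ℂ) =
        (n i : ℂ) • Matrix.of 1 := by
      ext; simp [Matrix.mul_apply]
    by_cases hS : i ∈ S <;> by_cases hT : i ∈ T <;> simp [hS, hT, hJ]
  rw [onesOn, onesOn, kronC_mul, funext hfactor, kronC_smul, prod_ite_mem, univ_inter, onesOn]

theorem commute_onesOn (S T : Finset (Fin d)) : Commute (onesOn n S) (onesOn n T) := by
  rw [Commute, SemiconjBy, onesOn_mul_onesOn, onesOn_mul_onesOn, inter_comm, union_comm]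

def oneCoords {m : ℕ} (a : Fin m → ZMod 2) : Finset (Fin m) := univ.filter fun i => a i = 1

theorem wt_ne_zero {m : ℕ} {a : Fin m → ZMod 2} (ha : a ≠ 0) : wt a ≠ 0 := by
  have hZMod2 : ∀ x : ZMod 2, x ≠ 0 → x = 1 := by decide
  obtain ⟨i, hi⟩ := Function.ne_iff.mp ha
  exact card_ne_zero.mpr ⟨i, mem_filter.mpr ⟨mem_univ i, hZMod2 _ hi⟩⟩

theorem compKron_eq_sum_s15 (a : Fin d → ZMod 2) :
    compKron n a = ∑ t ∈ (oneCoords a).powerset, (-1 : ℂ) ^ #t • onesOn n (oneCoords a \ t) := by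
  set s := oneCoords a
  ext u v
  have hsplit : compKron n a u v =
      (∏ i ∈ s, (1 - if u i = v i then 1 else 0)) * ∏ i ∈ sᶜ, if u i = v i then 1 else 0 := by
    rw [compKron, kronC, Matrix.of_apply, ← prod_mul_prod_compl s]
    congr 1 <;> refine prod_congr rfl fun i hi => ?_
    · have : a i = 1 := (mem_filter.mp hi).2
      by_cases h : u i = v i <;> simp [this, Kadj, h]
    · have : a i ≠ 1 := fun h => mem_compl.mp hi (mem_filter.mpr ⟨mem_univ i, h⟩)
      simp [this, Matrix.one_apply]
  rw [hsplit, prod_sub, sum_mul, Matrix.sum_apply]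
  refine sum_congr rfl fun t ht => ?_
  have hts : t ⊆ s := mem_powerset.mp ht
  rw [Matrix.smul_apply, onesOn_apply, prod_const_one, mul_one, mul_assoc, smul_eq_mul,
    ← prod_union (disjoint_of_subset_left hts disjoint_compl_right)]
  congr 2
  ext i
  by_cases hi : i ∈ t <;> simp [hi]

theorem exp_smul_onesOn {c : ℂ} (hn : ∀ i, n i ≠ 0) (hc : ∀ i, Complex.exp (c * n i) = 1)
    {S : Finset (Fin d)} (hS : S.Nonempty) : exp (c • onesOn n S) = 1 := by
  obtain ⟨j, hj⟩ := hS
  open scoped Matrix.Norms.Operator in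
  refine exp_smul_eq_one_of_mul_self_eq_smul (N := ∏ i ∈ S, (n i : ℂ)) ?_ ?_ ?_
  · exact prod_ne_zero_iff.mpr fun i _ => Nat.cast_ne_zero.mpr (hn i)
  · simpa using onesOn_mul_onesOn (n := n) S S
  · rw [← mul_prod_erase S _ hj, ← mul_assoc, ← Nat.cast_prod, mul_comm, Complex.exp_nat_mul, hc,
      one_pow]

theorem commute_compKron (a b : Fin d → ZMod 2) : Commute (compKron n a) (compKron n b) := by
  rw [compKron_eq_sum_s15, compKron_eq_sum_s15]
  exact Commute.sum_left _ _ _ fun t _ => Commute.sum_right _ _ _ fun t' _ =>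
    ((commute_onesOn _ _).smul_left _).smul_right _

theorem exp_smul_compKron {c : ℂ} (hn : ∀ i, n i ≠ 0) (hc : ∀ i, Complex.exp (c * n i) = 1)
    (a : Fin d → ZMod 2) : exp (c • compKron n a) = Complex.exp (c * (-1) ^ wt a) • 1 := by
  have hexp : ∀ t ∈ (oneCoords a).powerset, exp ((c * (-1) ^ #t) • onesOn n (oneCoords a \ t)) =
      (if t = oneCoords a then Complex.exp (c * (-1) ^ wt a) else 1) • 1 := by
    intro t ht
    by_cases hts : t = oneCoords a
    · rw [if_pos hts, hts, Finset.sdiff_self, onesOn_empty]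
      open scoped Matrix.Norms.Operator in
      exact exp_smul_one _
    · have hc' : ∀ i, Complex.exp (c * (-1) ^ #t * n i) = 1 := by
        rcases neg_one_pow_eq_or ℂ #t with h | h <;> simp [h, Complex.exp_neg, hc]
      rw [if_neg hts, one_smul]
      refine exp_smul_onesOn hn hc' (sdiff_nonempty.mpr fun hst => hts ?_)
      exact subset_antisymm (mem_powerset.mp ht) hst
  rw [compKron_eq_sum_s15, smul_sum]
  simp_rw [smul_smul]
  open scoped Matrix.Norms.Operator in
  refine (exp_sum_of_commute_of_exp_eq_smul_one _ _ _
    (fun t _ t' _ _ => ((commute_onesOn _ _).smul_left _).smul_right _) hexp).trans ?_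
  rw [prod_ite_eq', if_pos (mem_powerset_self _)]

theorem exp_smul_sum_compKron {c : ℂ} (hn : ∀ i, n i ≠ 0) (hc : ∀ i, Complex.exp (c * n i) = 1)
    (𝒜 : Finset (Fin d → ZMod 2)) :
    exp (c • ∑ a ∈ 𝒜, compKron n a) = Complex.exp (∑ a ∈ 𝒜, c * (-1) ^ wt a) • 1 := by
  rw [smul_sum, Complex.exp_sum]
  open scoped Matrix.Norms.Operator in
  exact exp_sum_of_commute_of_exp_eq_smul_one _ _ _
    (fun a _ b _ _ => ((commute_compKron a b).smul_left _).smul_right _)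
    (fun a _ => exp_smul_compKron hn hc a)

end KroneckerFamily

section KroneckerOne

variable (m k : Type*) [Fintype m] [DecidableEq m] [Fintype k] [DecidableEq k]

noncomputable def kroneckerOneRingHom : Matrix m m ℂ →+* Matrix (m × k) (m × k) ℂ where
  toFun A := A ⊗ₖ 1
  map_one' := Matrix.one_kronecker_one
  map_mul' A B := by rw [← Matrix.mul_kronecker_mul, mul_one]
  map_zero' := Matrix.zero_kronecker _
  map_add' A B := Matrix.add_kronecker A B _

variable {m k}

theorem exp_kronecker_one (A : Matrix m m ℂ) :
    exp (A ⊗ₖ (1 : Matrix k k ℂ)) = exp A ⊗ₖ 1 := by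
  have hcont : Continuous (kroneckerOneRingHom m k) :=
    continuous_pi fun p : m × k => continuous_pi fun q : m × k =>
      (continuous_id.matrix_elem p.1 q.1).mul continuous_const
  open scoped Matrix.Norms.Operator in
  exact (map_exp (kroneckerOneRingHom m k) hcont A).symm

theorem sum_kronecker_one {ι : Type*} (s : Finset ι) (A : ι → Matrix m m ℂ) :
    ∑ i ∈ s, A i ⊗ₖ (1 : Matrix k k ℂ) = (∑ i ∈ s, A i) ⊗ₖ 1 :=
  (map_sum (kroneckerOneRingHom m k) A s).symm

end KroneckerOne

theorem stmt15_general (d r : ℕ) (n : Fin d → ℕ) (hn : ∀ i, 3 ≤ n i)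
    (𝒜 : Finset (Fin d → ZMod 2)) (h0 : 0 ∉ 𝒜) :
    NormedSpace.exp
        ((-Complex.I * ((2 * Real.pi / ((Finset.univ.gcd n : ℕ) : ℝ) : ℝ) : ℂ)) •
          ∑ a ∈ 𝒜, (compKron n a) ⊗ₖ (1 : Matrix (Fin r → ZMod 2) (Fin r → ZMod 2) ℂ)) =
      Complex.exp (∑ a ∈ 𝒜, (-1 : ℂ) ^ (wt a - 1) *
          ((2 * Real.pi / ((Finset.univ.gcd n : ℕ) : ℝ) : ℝ) : ℂ) * Complex.I) •
        (1 : Matrix ((∀ i, Fin (n i)) × (Fin r → ZMod 2))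
          ((∀ i, Fin (n i)) × (Fin r → ZMod 2)) ℂ) ∧
    ∀ p : (∀ i, Fin (n i)) × (Fin r → ZMod 2),
      ‖(NormedSpace.exp
        ((-Complex.I * ((2 * Real.pi / ((Finset.univ.gcd n : ℕ) : ℝ) : ℝ) : ℂ)) •
          ∑ a ∈ 𝒜, (compKron n a) ⊗ₖ
            (1 : Matrix (Fin r → ZMod 2) (Fin r → ZMod 2) ℂ))) p p‖ = 1 := by
  set τ : ℝ := 2 * Real.pi / (univ.gcd n : ℕ)
  have hc (i : Fin d) : Complex.exp (-Complex.I * τ * n i) = 1 :=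
    Complex.exp_neg_I_mul_two_pi_div_mul_natCast_of_dvd (gcd_dvd (mem_univ i))
  have hsign : ∀ a ∈ 𝒜, -Complex.I * τ * (-1) ^ wt a = (-1) ^ (wt a - 1) * τ * Complex.I := by
    intro a ha
    obtain ⟨k, hk⟩ := Nat.exists_eq_succ_of_ne_zero (wt_ne_zero (ne_of_mem_of_not_mem ha h0))
    rw [hk, Nat.succ_sub_one, pow_succ]
    ring
  have hexp : exp ((-Complex.I * τ) • ∑ a ∈ 𝒜, compKron n a ⊗ₖ
        (1 : Matrix (Fin r → ZMod 2) (Fin r → ZMod 2) ℂ)) =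
      Complex.exp (∑ a ∈ 𝒜, (-1) ^ (wt a - 1) * τ * Complex.I) • 1 := by
    rw [sum_kronecker_one, ← Matrix.smul_kronecker, exp_kronecker_one,
      exp_smul_sum_compKron (fun i => by have := hn i; omega) hc, sum_congr rfl hsign,
      Matrix.smul_kronecker, Matrix.one_kronecker_one]
  refine ⟨hexp, fun p => ?_⟩
  rw [hexp, Matrix.smul_apply, Matrix.one_apply_eq, smul_eq_mul, mul_one, ← sum_mul]
  exact_mod_cast Complex.norm_exp_ofReal_mul_I (∑ a ∈ 𝒜, (-1) ^ (wt a - 1) * τ)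

/-- if every element of the basis has its last `r` coordinates zero
(`𝒜 = 𝒜' × {0}`), then `exp(-i(2π/h)B) = exp(Σ_{a∈𝒜'}(-1)^{w(a)-1}(2π/h)i)·I`, so the
graph is periodic with period `2π/h`, where `h = gcd(n_1,…,n_d)`. -/
theorem stmt15 (d r : ℕ) (hd : 0 < d) (n : Fin d → ℕ) (hn : ∀ i, 3 ≤ n i)
    (𝒜 : Finset (Fin d → ZMod 2)) (h1 : 𝒜.Nonempty) (h0 : 0 ∉ 𝒜) :
    NormedSpace.exp
        ((-Complex.I * ((2 * Real.pi / ((Finset.univ.gcd n : ℕ) : ℝ) : ℝ) : ℂ)) •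
          ∑ a ∈ 𝒜, (compKron n a) ⊗ₖ (1 : Matrix (Fin r → ZMod 2) (Fin r → ZMod 2) ℂ)) =
      Complex.exp (∑ a ∈ 𝒜, (-1 : ℂ) ^ (wt a - 1) *
          ((2 * Real.pi / ((Finset.univ.gcd n : ℕ) : ℝ) : ℝ) : ℂ) * Complex.I) •
        (1 : Matrix ((∀ i, Fin (n i)) × (Fin r → ZMod 2))
          ((∀ i, Fin (n i)) × (Fin r → ZMod 2)) ℂ) ∧
    ∀ p : (∀ i, Fin (n i)) × (Fin r → ZMod 2),
      ‖(NormedSpace.exp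
        ((-Complex.I * ((2 * Real.pi / ((Finset.univ.gcd n : ℕ) : ℝ) : ℝ) : ℂ)) •
          ∑ a ∈ 𝒜, (compKron n a) ⊗ₖ
            (1 : Matrix (Fin r → ZMod 2) (Fin r → ZMod 2) ℂ))) p p‖ = 1 :=
  stmt15_general d r n hn 𝒜 h0
end

section
/- Let 𝒜' ⊆ (ℤ/2)^r \ {0} be nonempty, N ≥ 1, and B = Σ_{a∈𝒜'} I_N ⊗ M_a with M_a = A_{K_2}^{a_1} ⊗ ⋯ ⊗ A_{K_2}^{a_r}. Set c = Σ_{a∈𝒜'} a in (ℤ/2)^r. Then exp(-i(π/2)B) = (-i)^{|𝒜'|} · (I_N ⊗ M_c). In particular, if c ≠ 0 the graph admits perfect state transfer from every vertex (x,u) to (x, u+c) at time π/2, and if c = 0 the graph is periodic with period π/2. -/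
open Kronecker

/-! Each `I ⊗ M_a` is an involution, and `a ↦ I ⊗ M_a` turns sums in `(ℤ/2)^r` into products,
so the summands of `B` commute and `exp(-iπ/2 · B)` is the product of the
`exp(-iπ/2 · I ⊗ M_a) = cos(π/2) - i sin(π/2) · I ⊗ M_a = -i · I ⊗ M_a`, which is
`(-i)^{|𝒜'|} · I ⊗ M_c`. Finally `I ⊗ M_c` is the permutation matrix of `(x, u) ↦ (x, u + c)`,
so the entries at `((x, u), (x, u + c))` have modulus one. -/

open NormedSpace

theorem exp_smul_eq_cosh_add_sinh_of_mul_self_eq_one {𝔸 : Type*} [NormedRing 𝔸]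
    [NormedAlgebra ℂ 𝔸] [CompleteSpace 𝔸] {X : 𝔸} (hX : X * X = 1) (z : ℂ) :
    exp (z • X) = Complex.cosh z • (1 : 𝔸) + Complex.sinh z • X := by
  have heven (k : ℕ) : X ^ (2 * k) = 1 := by rw [pow_mul, sq, hX, one_pow]
  have hodd (k : ℕ) : X ^ (2 * k + 1) = X := by rw [pow_succ, heven, one_mul]
  rw [exp_eq_tsum (𝕂 := ℂ)]
  refine (HasSum.even_add_odd ?_ ?_).tsum_eq
  · convert (Complex.hasSum_cosh z).smul_const (1 : 𝔸) using 2 with k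
    rw [smul_pow, heven, smul_smul, div_eq_mul_inv, mul_comm]
  · convert (Complex.hasSum_sinh z).smul_const X using 2 with k
    rw [smul_pow, hodd, smul_smul, div_eq_mul_inv, mul_comm]

theorem Matrix.exp_neg_I_pi_div_two_smul_of_mul_self_eq_one {m : Type*} [Fintype m]
    [DecidableEq m] {X : Matrix m m ℂ} (hX : X * X = 1) :
    exp ((-Complex.I * ((Real.pi / 2 : ℝ) : ℂ)) • X) = -Complex.I • X := by
  let _ : NormedRing (Matrix m m ℂ) := Matrix.linftyOpNormedRing
  let _ : NormedAlgebra ℂ (Matrix m m ℂ) := Matrix.linftyOpNormedAlgebra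
  refine (exp_smul_eq_cosh_add_sinh_of_mul_self_eq_one hX _).trans ?_
  rw [neg_mul, mul_comm, Complex.cosh_neg, Complex.sinh_neg, Complex.cosh_mul_I,
    Complex.sinh_mul_I, ← Complex.ofReal_cos, ← Complex.ofReal_sin, Real.cos_pi_div_two,
    Real.sin_pi_div_two]
  simp

theorem Matrix.exp_neg_I_pi_div_two_smul_sum {G m : Type*} [AddCommMonoid G] [Fintype m]
    [DecidableEq m] (K : G → Matrix m m ℂ) (hK_add : ∀ a b, K (a + b) = K a * K b)
    (hK_zero : K 0 = 1) (s : Finset G) (hs : ∀ a ∈ s, K a * K a = 1) :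
    exp ((-Complex.I * ((Real.pi / 2 : ℝ) : ℂ)) • ∑ a ∈ s, K a) =
      (-Complex.I) ^ s.card • K (∑ a ∈ s, a) := by
  classical
  induction s using Finset.induction_on with
  | empty => simp [hK_zero]
  | insert a s ha ih =>
    have hcomm : Commute (K a) (∑ b ∈ s, K b) :=
      Commute.sum_right s _ _ fun b _ => by rw [Commute, SemiconjBy, ← hK_add, ← hK_add, add_comm]
    rw [Finset.sum_insert ha, smul_add, Matrix.exp_add_of_commute _ _
      ((hcomm.smul_left _).smul_right _), ih fun b hb => hs b (Finset.mem_insert_of_mem hb),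
      Matrix.exp_neg_I_pi_div_two_smul_of_mul_self_eq_one (hs a (Finset.mem_insert_self a s)),
      smul_mul_smul_comm, ← hK_add, Finset.sum_insert ha, Finset.card_insert_of_notMem ha,
      pow_succ']

theorem ite_A2_one_apply (b x y : ZMod 2) :
    (if b = 1 then A2 else 1) x y = if y = x + b then 1 else 0 := by
  have h : ∀ x : ZMod 2, x = 0 ∨ x = 1 := by decide
  have h11 : (1 : ZMod 2) + 1 = 0 := rfl
  rcases h b with rfl | rfl <;> rcases h x with rfl | rfl <;> rcases h y with rfl | rfl <;>
    simp [A2, h11]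

theorem cube_apply {r : ℕ} (a u v : Fin r → ZMod 2) :
    cube a u v = if v = u + a then 1 else 0 := by
  simp only [cube, Matrix.of_apply, ite_A2_one_apply, Finset.prod_boole, funext_iff,
    Pi.add_apply, Finset.mem_univ, forall_const]

theorem cube_add {r : ℕ} (a b : Fin r → ZMod 2) : cube (a + b) = cube a * cube b := by
  ext u v
  rw [Matrix.mul_apply, Finset.sum_eq_single (u + a) (fun w _ hw => by simp [cube_apply, hw])
    (fun h => absurd (Finset.mem_univ _) h)]
  simp [cube_apply, add_assoc]

theorem cube_zero {r : ℕ} : cube (0 : Fin r → ZMod 2) = 1 := by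
  ext u v
  simp [cube_apply, Matrix.one_apply, eq_comm]

theorem one_kronecker_cube_add {N r : ℕ} (a b : Fin r → ZMod 2) :
    (1 : Matrix (Fin N) (Fin N) ℂ) ⊗ₖ cube (a + b) =
      ((1 : Matrix (Fin N) (Fin N) ℂ) ⊗ₖ cube a) * ((1 : Matrix (Fin N) (Fin N) ℂ) ⊗ₖ cube b) := by
  rw [← Matrix.mul_kronecker_mul, one_mul, cube_add]

theorem one_kronecker_cube_mul_self {N r : ℕ} (a : Fin r → ZMod 2) :
    ((1 : Matrix (Fin N) (Fin N) ℂ) ⊗ₖ cube a) * ((1 : Matrix (Fin N) (Fin N) ℂ) ⊗ₖ cube a) = 1 := by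
  rw [← one_kronecker_cube_add, show a + a = 0 from funext fun j => CharTwo.add_self_eq_zero (a j),
    cube_zero, Matrix.one_kronecker_one]

theorem stmt16_general (N r : ℕ) (𝒜 : Finset (Fin r → ZMod 2)) :
    NormedSpace.exp ((-Complex.I * ((Real.pi / 2 : ℝ) : ℂ)) •
        ∑ a ∈ 𝒜, (1 : Matrix (Fin N) (Fin N) ℂ) ⊗ₖ cube a) =
      (-Complex.I) ^ 𝒜.card • ((1 : Matrix (Fin N) (Fin N) ℂ) ⊗ₖ cube (∑ a ∈ 𝒜, a)) ∧
    ((∑ a ∈ 𝒜, a) ≠ 0 → ∀ (x : Fin N) (u : Fin r → ZMod 2),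
      (x, u) ≠ (x, u + ∑ a ∈ 𝒜, a) ∧
      ‖(NormedSpace.exp ((-Complex.I * ((Real.pi / 2 : ℝ) : ℂ)) •
        ∑ a ∈ 𝒜, (1 : Matrix (Fin N) (Fin N) ℂ) ⊗ₖ cube a))
          (x, u) (x, u + ∑ a ∈ 𝒜, a)‖ = 1) ∧
    ((∑ a ∈ 𝒜, a) = 0 → ∀ p : Fin N × (Fin r → ZMod 2),
      ‖(NormedSpace.exp ((-Complex.I * ((Real.pi / 2 : ℝ) : ℂ)) •
        ∑ a ∈ 𝒜, (1 : Matrix (Fin N) (Fin N) ℂ) ⊗ₖ cube a)) p p‖ = 1) := by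
  rw [Matrix.exp_neg_I_pi_div_two_smul_sum (fun a => (1 : Matrix (Fin N) (Fin N) ℂ) ⊗ₖ cube a)
    one_kronecker_cube_add (by rw [cube_zero, Matrix.one_kronecker_one]) 𝒜
    fun a _ => one_kronecker_cube_mul_self a]
  refine ⟨rfl, fun hc x u => ⟨by simpa using hc, ?_⟩, fun hc p => ?_⟩ <;>
    simp [cube_apply, hc]

/-- for nonempty `𝒜' ⊆ (ℤ/2)^r \ {0}`, `B = Σ_{a∈𝒜'} I_N ⊗ M_a` and
`c = Σ_{a∈𝒜'} a`, one has `exp(-i(π/2)B) = (-i)^{|𝒜'|}·(I_N ⊗ M_c)`; in particular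
PST from `(x,u)` to `(x,u+c)` at time `π/2` if `c ≠ 0`, and periodicity with period
`π/2` if `c = 0`. -/
theorem stmt16 (N r : ℕ) (hN : 1 ≤ N) (𝒜 : Finset (Fin r → ZMod 2))
    (h1 : 𝒜.Nonempty) (h0 : 0 ∉ 𝒜) :
    NormedSpace.exp ((-Complex.I * ((Real.pi / 2 : ℝ) : ℂ)) •
        ∑ a ∈ 𝒜, (1 : Matrix (Fin N) (Fin N) ℂ) ⊗ₖ cube a) =
      (-Complex.I) ^ 𝒜.card • ((1 : Matrix (Fin N) (Fin N) ℂ) ⊗ₖ cube (∑ a ∈ 𝒜, a)) ∧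
    ((∑ a ∈ 𝒜, a) ≠ 0 → ∀ (x : Fin N) (u : Fin r → ZMod 2),
      (x, u) ≠ (x, u + ∑ a ∈ 𝒜, a) ∧
      ‖(NormedSpace.exp ((-Complex.I * ((Real.pi / 2 : ℝ) : ℂ)) •
        ∑ a ∈ 𝒜, (1 : Matrix (Fin N) (Fin N) ℂ) ⊗ₖ cube a))
          (x, u) (x, u + ∑ a ∈ 𝒜, a)‖ = 1) ∧
    ((∑ a ∈ 𝒜, a) = 0 → ∀ p : Fin N × (Fin r → ZMod 2),
      ‖(NormedSpace.exp ((-Complex.I * ((Real.pi / 2 : ℝ) : ℂ)) •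
        ∑ a ∈ 𝒜, (1 : Matrix (Fin N) (Fin N) ℂ) ⊗ₖ cube a)) p p‖ = 1) :=
  stmt16_general N r 𝒜
end
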